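/- arXiv:1602.09013 — 3 statements merged into one kernel-verified Lean document; each statement's English description precedes it below -/
import Mathlib

section
/- In non-Gaussian CCA, x_1 = D_1α + ε_1 and x_2 = D_2α + ε_2 with α ⊥ (ε_1, ε_2) and ε_1 ⊥ ε_2, the cross-derivative of the joint cumulant generating function satisfies ∇_{t_1}∇_{t_2} K_x(t_1, t_2) = D_1 C_α(D_1⊤t_1 + D_2⊤t_2) D_2⊤, where C_α(h) is the Hessian of the CGF of α; in particular the generalized cross-covariance S_12(t) is independent of the noise distributions and has the diagonal form D_1 C_α(h(t)) D_2⊤ with C_α diagonal when α has independent components. -/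
/-! Independence factorises the moment generating function of `(x₁, x₂)` near `(t₁, t₂)`, so
that `K_x(s₁, s₂) = K_α(D₁ᵀ s₁ + D₂ᵀ s₂) + K_{ε₁}(s₁) + K_{ε₂}(s₂)`. Each noise term depends on
only one block of variables and drops out of the mixed second derivative, which is then the chain
rule for `K_α` composed with a linear map. Independence of the components of `α` likewise makes
`K_α` a sum of one-variable cumulant generating functions near `h`, and the Hessian of such a sum
is diagonal. -/

open MeasureTheory ProbabilityTheory Real Matrix Filter
open scoped Topology

section SecondDerivative

variable {E E₁ E₂ G F : Type*}
  [NormedAddCommGroup E] [NormedSpace ℝ E] [NormedAddCommGroup E₁] [NormedSpace ℝ E₁]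
  [NormedAddCommGroup E₂] [NormedSpace ℝ E₂] [NormedAddCommGroup G] [NormedSpace ℝ G]
  [NormedAddCommGroup F] [NormedSpace ℝ F]

theorem ContDiffAt.differentiableAt_fderiv {f : E → F} {x : E} (hf : ContDiffAt ℝ 2 f x) :
    DifferentiableAt ℝ (fderiv ℝ f) x :=
  (hf.fderiv_right (m := 1) (by norm_num)).differentiableAt one_ne_zero

theorem ContDiffAt.eventually_differentiableAt {f : E → F} {x : E} (hf : ContDiffAt ℝ 2 f x) :
    ∀ᶠ y in 𝓝 x, DifferentiableAt ℝ f y :=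
  (hf.eventually (by simp)).mono fun _ hy => hy.differentiableAt (by norm_num)

theorem fderiv_fun_fderiv_apply {f : E → F} {x : E} (hf : ContDiffAt ℝ 2 f x) (v w : E) :
    fderiv ℝ (fun u => fderiv ℝ f u w) x v = fderiv ℝ (fderiv ℝ f) x v w := by
  rw [fderiv_clm_apply hf.differentiableAt_fderiv (differentiableAt_const w)]
  simp

theorem fderiv_fderiv_add {f g : E → F} {x : E} (hf : ContDiffAt ℝ 2 f x)
    (hg : ContDiffAt ℝ 2 g x) :
    fderiv ℝ (fderiv ℝ (f + g)) x = fderiv ℝ (fderiv ℝ f) x + fderiv ℝ (fderiv ℝ g) x := by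
  have hfg : fderiv ℝ (f + g) =ᶠ[𝓝 x] fderiv ℝ f + fderiv ℝ g := by
    filter_upwards [hf.eventually_differentiableAt, hg.eventually_differentiableAt]
      with y hfy hgy
    exact fderiv_add hfy hgy
  rw [hfg.fderiv_eq, fderiv_add hf.differentiableAt_fderiv hg.differentiableAt_fderiv]

theorem fderiv_fderiv_comp_continuousLinearMap {f : E → F} (L : G →L[ℝ] E) {x : G}
    (hf : ContDiffAt ℝ 2 f (L x)) (v w : G) :
    fderiv ℝ (fderiv ℝ (f ∘ L)) x v w = fderiv ℝ (fderiv ℝ f) (L x) (L v) (L w) := by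
  have hfL : ContDiffAt ℝ 2 (f ∘ L) x := hf.comp x L.contDiff.contDiffAt
  have hφ : DifferentiableAt ℝ (fun u => fderiv ℝ f u (L w)) (L x) := by
    have := hf.differentiableAt_fderiv
    fun_prop
  have hfirst : (fun u => fderiv ℝ (f ∘ L) u w) =ᶠ[𝓝 x]
      (fun u => fderiv ℝ f u (L w)) ∘ L := by
    filter_upwards [L.continuous.continuousAt.eventually hf.eventually_differentiableAt]
      with u hu
    simp [fderiv_comp u hu L.differentiableAt]
  rw [← fderiv_fun_fderiv_apply hfL, hfirst.fderiv_eq, fderiv_comp x hφ L.differentiableAt,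
    ← fderiv_fun_fderiv_apply hf]
  simp

theorem fderiv_partial_partial_eq {f : E₁ × E₂ → F} {t₁ : E₁} {t₂ : E₂}
    (hf : ContDiffAt ℝ 2 f (t₁, t₂)) (v : E₁) (w : E₂) :
    fderiv ℝ (fun s₂ => fderiv ℝ (fun s₁ => f (s₁, s₂)) t₁ v) t₂ w
      = fderiv ℝ (fderiv ℝ f) (t₁, t₂) (0, w) (v, 0) := by
  have hslice : Tendsto (fun s₂ => (t₁, s₂)) (𝓝 t₂) (𝓝 (t₁, t₂)) :=
    (continuous_const.prodMk continuous_id).tendsto t₂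
  have hinner : (fun s₂ => fderiv ℝ (fun s₁ => f (s₁, s₂)) t₁ v) =ᶠ[𝓝 t₂]
      fun s₂ => fderiv ℝ f (t₁, s₂) (v, 0) := by
    filter_upwards [hslice.eventually hf.eventually_differentiableAt] with s₂ hs₂
    have hcomp := hs₂.hasFDerivAt.comp t₁ (hasFDerivAt_prodMk_left (𝕜 := ℝ) t₁ s₂)
    rw [Function.comp_def] at hcomp
    simp [hcomp.fderiv]
  have hφ : DifferentiableAt ℝ (fun u => fderiv ℝ f u (v, 0)) (t₁, t₂) := by
    have := hf.differentiableAt_fderiv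
    fun_prop
  have hcomp := hφ.hasFDerivAt.comp t₂ (hasFDerivAt_prodMk_right (𝕜 := ℝ) t₁ t₂)
  rw [Function.comp_def] at hcomp
  simp [hinner.fderiv_eq, ← fderiv_fun_fderiv_apply hf, hcomp.fderiv]

theorem fderiv_fderiv_apply_eq_zero_of_separated {f P Q : E → F} {x v w : E}
    (hf : ContDiffAt ℝ 2 f x) (hfPQ : f =ᶠ[𝓝 x] P + Q)
    (hP : ∀ y (b : ℝ), P (y + b • w) = P y) (hQ : ∀ y (a : ℝ), Q (y + a • v) = Q y) :
    fderiv ℝ (fderiv ℝ f) x v w = 0 := by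
  -- `∂_w f = ∂_w Q` near `x`, and `∂_w Q` is constant along `v`.
  have hpartial : ∀ᶠ y in 𝓝 x, fderiv ℝ f y w = lineDeriv ℝ Q y w := by
    filter_upwards [hf.eventually_differentiableAt, hfPQ.eventuallyEq_nhds] with y hy hyPQ
    rw [← hy.lineDeriv_eq_fderiv, hyPQ.lineDeriv_eq]
    simp only [lineDeriv, Pi.add_apply, hP, deriv_const_add]
  have hline : Tendsto (fun a : ℝ => x + a • v) (𝓝 0) (𝓝 x) := by
    have hcont : Continuous fun a : ℝ => x + a • v := by fun_prop
    simpa using hcont.tendsto 0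
  have hconst : (fun a : ℝ => fderiv ℝ f (x + a • v) w) =ᶠ[𝓝 0]
      fun _ => lineDeriv ℝ Q x w := by
    filter_upwards [hline.eventually hpartial] with a ha
    simp only [ha, lineDeriv, add_right_comm x (a • v), hQ]
  have hφ : DifferentiableAt ℝ (fun u => fderiv ℝ f u w) x := by
    have := hf.differentiableAt_fderiv
    fun_prop
  rw [← fderiv_fun_fderiv_apply hf, ← hφ.lineDeriv_eq_fderiv, lineDeriv, hconst.deriv_eq]
  simp

theorem fderiv_fderiv_inr_inl_eq_zero {f : E₁ × E₂ → F} {A : E₁ → F} {B : E₂ → F}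
    {x : E₁ × E₂} (hf : ContDiffAt ℝ 2 f x) (hAB : ∀ᶠ s in 𝓝 x, f s = A s.1 + B s.2)
    (v : E₁) (w : E₂) :
    fderiv ℝ (fderiv ℝ f) x (0, w) (v, 0) = 0 :=
  fderiv_fderiv_apply_eq_zero_of_separated (P := fun s => B s.2) (Q := fun s => A s.1) hf
    (hAB.mono fun s hs => hs.trans (add_comm _ _)) (by simp) (by simp)

theorem fderiv_partial_partial_eq_of_eventuallyEq_comp_add {f : E₁ × E₂ → F} {g : E → F}
    {A : E₁ → F} {B : E₂ → F} (L : E₁ × E₂ →L[ℝ] E) {t₁ : E₁} {t₂ : E₂}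
    (hf : ContDiffAt ℝ 2 f (t₁, t₂)) (hg : ContDiffAt ℝ 2 g (L (t₁, t₂)))
    (hfg : ∀ᶠ s in 𝓝 (t₁, t₂), f s = g (L s) + A s.1 + B s.2) (v : E₁) (w : E₂) :
    fderiv ℝ (fun s₂ => fderiv ℝ (fun s₁ => f (s₁, s₂)) t₁ v) t₂ w
      = fderiv ℝ (fderiv ℝ g) (L (t₁, t₂)) (L (0, w)) (L (v, 0)) := by
  have hgL : ContDiffAt ℝ 2 (g ∘ L) (t₁, t₂) := hg.comp _ L.contDiff.contDiffAt
  have hR : ContDiffAt ℝ 2 (f - g ∘ L) (t₁, t₂) := hf.sub hgL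
  have hRAB : ∀ᶠ s in 𝓝 (t₁, t₂), (f - g ∘ L) s = A s.1 + B s.2 :=
    hfg.mono fun s hs => by simp [hs, add_assoc]
  have hsplit := fderiv_fderiv_add hgL hR
  rw [add_sub_cancel] at hsplit
  rw [fderiv_partial_partial_eq hf, hsplit, _root_.add_apply, _root_.add_apply,
    fderiv_fderiv_comp_continuousLinearMap L hg, fderiv_fderiv_inr_inl_eq_zero hR hRAB, add_zero]

theorem fderiv_fderiv_single_eq_zero_of_eventuallyEq_sum {ι : Type*} [Fintype ι]
    [DecidableEq ι] {f : (ι → ℝ) → F} {g : ι → ℝ → F} {x : ι → ℝ} (hf : ContDiffAt ℝ 2 f x)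
    (hg : ∀ᶠ u in 𝓝 x, f u = ∑ k, g k (u k)) {i j : ι} (hij : i ≠ j) :
    fderiv ℝ (fderiv ℝ f) x (Pi.single i 1) (Pi.single j 1) = 0 := by
  refine fderiv_fderiv_apply_eq_zero_of_separated
    (P := fun u => ∑ k ∈ Finset.univ.erase j, g k (u k)) (Q := fun u => g j (u j)) hf ?_
    (fun y b => ?_) (fun y a => ?_)
  · filter_upwards [hg] with u hu
    simp [hu]
  · refine Finset.sum_congr rfl fun k hk => ?_
    simp [Finset.ne_of_mem_erase hk]
  · simp [hij.symm]

end SecondDerivative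

theorem ContinuousLinearMap.apply_apply_eq_sum_single {ι : Type*} [Fintype ι] [DecidableEq ι]
    (B : (ι → ℝ) →L[ℝ] (ι → ℝ) →L[ℝ] ℝ) (a b : ι → ℝ) :
    B a b = ∑ i, ∑ j, a i * B (Pi.single i 1) (Pi.single j 1) * b j := by
  conv_lhs => rw [pi_eq_sum_univ' a, pi_eq_sum_univ' b]
  simp only [map_sum, map_smul, _root_.sum_apply, _root_.smul_apply,
    smul_eq_mul, Finset.mul_sum]
  rw [Finset.sum_comm]
  exact Finset.sum_congr rfl fun i _ => Finset.sum_congr rfl fun j _ => by ring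

noncomputable def transposeCoprod {ι κ₁ κ₂ : Type*} [Fintype ι] [Fintype κ₁] [Fintype κ₂]
    (D₁ : Matrix κ₁ ι ℝ) (D₂ : Matrix κ₂ ι ℝ) : (κ₁ → ℝ) × (κ₂ → ℝ) →L[ℝ] (ι → ℝ) :=
  LinearMap.toContinuousLinearMap (D₁ᵀ.mulVecLin.coprod D₂ᵀ.mulVecLin)

theorem transposeCoprod_apply {ι κ₁ κ₂ : Type*} [Fintype ι] [Fintype κ₁] [Fintype κ₂]
    (D₁ : Matrix κ₁ ι ℝ) (D₂ : Matrix κ₂ ι ℝ) (s : (κ₁ → ℝ) × (κ₂ → ℝ)) :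
    transposeCoprod D₁ D₂ s = D₁ᵀ *ᵥ s.1 + D₂ᵀ *ᵥ s.2 :=
  rfl

section CGF

variable {Ω ι : Type*} [MeasurableSpace Ω] [Fintype ι]

noncomputable def cgfVec (X : Ω → ι → ℝ) (μ : Measure Ω) (u : ι → ℝ) : ℝ :=
  log (∫ ω, exp (u ⬝ᵥ X ω) ∂μ)

variable {μ : Measure Ω}

theorem measurable_dotProduct_const_left (c : ι → ℝ) : Measurable fun a : ι → ℝ => c ⬝ᵥ a :=
  (continuous_const.dotProduct continuous_id).measurable

theorem integral_exp_add_of_indepFun {X Y : Ω → ℝ} (hXY : IndepFun X Y μ)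
    (hX : AEMeasurable X μ) (hY : AEMeasurable Y μ) :
    ∫ ω, exp (X ω + Y ω) ∂μ = (∫ ω, exp (X ω) ∂μ) * ∫ ω, exp (Y ω) ∂μ := by
  simpa [mgf] using hXY.mgf_add' hX.aestronglyMeasurable hY.aestronglyMeasurable (t := 1)

theorem cgfVec_eq_sum_cgf {α : Ω → ι → ℝ} (hindep : iIndepFun (fun k ω => α ω k) μ)
    (hα : Measurable α) {u : ι → ℝ} (hint : Integrable (fun ω => exp (u ⬝ᵥ α ω)) μ) :
    cgfVec α μ u = ∑ k, cgf (fun ω => α ω k) μ (u k) := by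
  have : IsProbabilityMeasure μ := hindep.isProbabilityMeasure
  have hprod : ∫ ω, exp (u ⬝ᵥ α ω) ∂μ = ∏ k, mgf (fun ω => α ω k) μ (u k) := by
    have := (hindep.comp (fun k y => u k * y) fun k => measurable_const_mul (u k)).mgf_sum
      (fun k => hα.eval.const_mul (u k)) Finset.univ (t := 1)
    simpa [mgf, dotProduct, Finset.sum_apply] using this
  have hpos : 0 < ∏ k, mgf (fun ω => α ω k) μ (u k) := hprod ▸ integral_exp_pos hint
  rw [cgfVec, hprod, log_prod fun k _ => Finset.prod_ne_zero_iff.1 hpos.ne' k (Finset.mem_univ k)]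
  rfl

theorem log_integral_exp_eq_cgfVec_add_cgfVec_add_cgfVec [NeZero μ]
    {κ₁ κ₂ : Type*} [Fintype κ₁] [Fintype κ₂]
    {α : Ω → ι → ℝ} {ε₁ x₁ : Ω → κ₁ → ℝ} {ε₂ x₂ : Ω → κ₂ → ℝ}
    {D₁ : Matrix κ₁ ι ℝ} {D₂ : Matrix κ₂ ι ℝ}
    (hx₁ : ∀ ω, x₁ ω = D₁ *ᵥ α ω + ε₁ ω) (hx₂ : ∀ ω, x₂ ω = D₂ *ᵥ α ω + ε₂ ω)
    (hα : Measurable α) (hε₁ : Measurable ε₁) (hε₂ : Measurable ε₂)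
    (hindep₁ : IndepFun α (fun ω => (ε₁ ω, ε₂ ω)) μ) (hindep₂ : IndepFun ε₁ ε₂ μ)
    {s₁ : κ₁ → ℝ} {s₂ : κ₂ → ℝ}
    (hint : Integrable (fun ω => exp (s₁ ⬝ᵥ x₁ ω + s₂ ⬝ᵥ x₂ ω)) μ) :
    log (∫ ω, exp (s₁ ⬝ᵥ x₁ ω + s₂ ⬝ᵥ x₂ ω) ∂μ)
      = cgfVec α μ (transposeCoprod D₁ D₂ (s₁, s₂)) + cgfVec ε₁ μ s₁ + cgfVec ε₂ μ s₂ := by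
  have hexponent : ∀ ω, s₁ ⬝ᵥ x₁ ω + s₂ ⬝ᵥ x₂ ω
      = transposeCoprod D₁ D₂ (s₁, s₂) ⬝ᵥ α ω + (s₁ ⬝ᵥ ε₁ ω + s₂ ⬝ᵥ ε₂ ω) := by
    intro ω
    simp only [hx₁, hx₂, transposeCoprod_apply, dotProduct_add, add_dotProduct,
      dotProduct_mulVec, mulVec_transpose]
    ring
  have hsplit : ∫ ω, exp (s₁ ⬝ᵥ x₁ ω + s₂ ⬝ᵥ x₂ ω) ∂μ
      = (∫ ω, exp (transposeCoprod D₁ D₂ (s₁, s₂) ⬝ᵥ α ω) ∂μ)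
        * ((∫ ω, exp (s₁ ⬝ᵥ ε₁ ω) ∂μ) * ∫ ω, exp (s₂ ⬝ᵥ ε₂ ω) ∂μ) := by
    have hdot := measurable_dotProduct_const_left (transposeCoprod D₁ D₂ (s₁, s₂))
    have hdot₁ := measurable_dotProduct_const_left s₁
    have hdot₂ := measurable_dotProduct_const_left s₂
    have hsource : IndepFun (fun ω => transposeCoprod D₁ D₂ (s₁, s₂) ⬝ᵥ α ω)
        (fun ω => s₁ ⬝ᵥ ε₁ ω + s₂ ⬝ᵥ ε₂ ω) μ :=
      hindep₁.comp hdot ((hdot₁.comp measurable_fst).add (hdot₂.comp measurable_snd))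
    have hnoise : IndepFun (fun ω => s₁ ⬝ᵥ ε₁ ω) (fun ω => s₂ ⬝ᵥ ε₂ ω) μ :=
      hindep₂.comp hdot₁ hdot₂
    simp_rw [hexponent]
    rw [integral_exp_add_of_indepFun hsource (hdot.comp hα).aemeasurable
        ((hdot₁.comp hε₁).add (hdot₂.comp hε₂)).aemeasurable,
      integral_exp_add_of_indepFun hnoise (hdot₁.comp hε₁).aemeasurable
        (hdot₂.comp hε₂).aemeasurable]
  have hpos := integral_exp_pos hint
  rw [hsplit] at hpos
  obtain ⟨hα₀, hε₀⟩ := mul_ne_zero_iff.1 hpos.ne'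
  obtain ⟨hε₁₀, hε₂₀⟩ := mul_ne_zero_iff.1 hε₀
  rw [hsplit, log_mul hα₀ hε₀, log_mul hε₁₀ hε₂₀, cgfVec, cgfVec, cgfVec, add_assoc]

end CGF

/-- Non-Gaussian CCA: for `x₁ = D₁α + ε₁`, `x₂ = D₂α + ε₂` with `α ⊥ (ε₁, ε₂)` and
`ε₁ ⊥ ε₂`, the mixed second derivative of the joint CGF satisfies
`∇_{t₁}∇_{t₂} K_x(t₁,t₂) = D₁ C_α(D₁⊤t₁ + D₂⊤t₂) D₂⊤`, where `C_α` is the Hessian of the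
CGF of `α`; in particular this generalized cross-covariance does not involve the noise
distributions, and `C_α` is diagonal since `α` has independent components. -/
theorem nonGaussian_CCA_generalized_cross_covariance {Ω : Type*} [MeasurableSpace Ω]
    (μ : Measure Ω) [IsProbabilityMeasure μ] {K M₁ M₂ : ℕ}
    (α : Ω → Fin K → ℝ) (ε₁ : Ω → Fin M₁ → ℝ) (ε₂ : Ω → Fin M₂ → ℝ)
    (x₁ : Ω → Fin M₁ → ℝ) (x₂ : Ω → Fin M₂ → ℝ)
    (D₁ : Matrix (Fin M₁) (Fin K) ℝ) (D₂ : Matrix (Fin M₂) (Fin K) ℝ)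
    (hx₁ : ∀ ω, x₁ ω = D₁.mulVec (α ω) + ε₁ ω)
    (hx₂ : ∀ ω, x₂ ω = D₂.mulVec (α ω) + ε₂ ω)
    (hmα : Measurable α) (hmε₁ : Measurable ε₁) (hmε₂ : Measurable ε₂)
    (hindepα : iIndepFun (fun k ω => α ω k) μ)
    (hindep₁ : IndepFun α (fun ω => (ε₁ ω, ε₂ ω)) μ)
    (hindep₂ : IndepFun ε₁ ε₂ μ)
    (t₁ : Fin M₁ → ℝ) (t₂ : Fin M₂ → ℝ)
    (h : Fin K → ℝ) (hh : h = fun k => (∑ m, D₁ m k * t₁ m) + ∑ m, D₂ m k * t₂ m)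
    (hintx : ∀ᶠ s in 𝓝 (t₁, t₂),
      Integrable (fun ω =>
        Real.exp ((∑ m, s.1 m * x₁ ω m) + ∑ m, s.2 m * x₂ ω m)) μ)
    (hintα : ∀ᶠ u in 𝓝 h, Integrable (fun ω => Real.exp (∑ k, u k * α ω k)) μ)
    (Kx : (Fin M₁ → ℝ) → (Fin M₂ → ℝ) → ℝ)
    (hKx : Kx = fun s₁ s₂ =>
      Real.log (∫ ω, Real.exp ((∑ m, s₁ m * x₁ ω m) + ∑ m, s₂ m * x₂ ω m) ∂μ))
    (Kα : (Fin K → ℝ) → ℝ)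
    (hKα : Kα = fun u => Real.log (∫ ω, Real.exp (∑ k, u k * α ω k) ∂μ))
    (hsmoothx : ContDiffAt ℝ 2 (fun s : (Fin M₁ → ℝ) × (Fin M₂ → ℝ) => Kx s.1 s.2) (t₁, t₂))
    (hsmoothα : ContDiffAt ℝ 2 Kα h) :
    (∀ (m₁ : Fin M₁) (m₂ : Fin M₂),
      fderiv ℝ (fun s₂ => fderiv ℝ (fun s₁ => Kx s₁ s₂) t₁ (Pi.single m₁ 1)) t₂
          (Pi.single m₂ 1)
        = ∑ i, ∑ j, D₁ m₁ i
            * (fderiv ℝ (fun u => fderiv ℝ Kα u (Pi.single j 1)) h (Pi.single i 1))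
            * D₂ m₂ j) ∧
    (∀ i j : Fin K, i ≠ j →
      fderiv ℝ (fun u => fderiv ℝ Kα u (Pi.single j 1)) h (Pi.single i 1) = 0) := by
  set L := transposeCoprod D₁ D₂
  have hLt : L (t₁, t₂) = h := by
    subst hh
    ext k
    simp [L, transposeCoprod_apply, mulVec, dotProduct]
  have hKα' : Kα = cgfVec α μ := hKα
  have hsources : ∀ᶠ u in 𝓝 h, Kα u = ∑ k, cgf (fun ω => α ω k) μ (u k) :=
    hintα.mono fun u hu => hKα' ▸ cgfVec_eq_sum_cgf hindepα hmα hu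
  have hobservations : ∀ᶠ s in 𝓝 (t₁, t₂),
      Kx s.1 s.2 = Kα (L s) + cgfVec ε₁ μ s.1 + cgfVec ε₂ μ s.2 :=
    hintx.mono fun s hs => by
      rw [hKx, hKα']
      exact log_integral_exp_eq_cgfVec_add_cgfVec_add_cgfVec hx₁ hx₂ hmα hmε₁ hmε₂ hindep₁
        hindep₂ hs
  refine ⟨fun m₁ m₂ => ?_, fun i j hij => ?_⟩
  · calc _ = fderiv ℝ (fderiv ℝ Kα) h (L (0, Pi.single m₂ 1)) (L (Pi.single m₁ 1, 0)) :=
          hLt ▸ fderiv_partial_partial_eq_of_eventuallyEq_comp_add (f := fun s => Kx s.1 s.2) L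
            hsmoothx (hLt ▸ hsmoothα) hobservations _ _
      _ = fderiv ℝ (fderiv ℝ Kα) h (D₁.row m₁) (D₂.row m₂) := by
          rw [(hsmoothα.isSymmSndFDerivAt (by simp)).eq]
          simp [L, transposeCoprod_apply]
      _ = _ := by
          rw [ContinuousLinearMap.apply_apply_eq_sum_single]
          simp [fderiv_fun_fderiv_apply hsmoothα]
  · rw [fderiv_fun_fderiv_apply hsmoothα]
    exact fderiv_fderiv_single_eq_zero_of_eventuallyEq_sum hsmoothα hsources hij
end

section
/- If W_1, W_2 are whitening matrices of a rank-K matrix S_12 (i.e., W_1 S_12 W_2⊤ = I_K), then for any invertible Q ∈ ℝ^{K×K}, the pair (Q W_1, Q^{-⊤} W_2) also whitens S_12; conversely, any other pair of whitening matrices (W̃_1, W̃_2) with rows spanning the same row spaces satisfies W̃_1 = Q W_1 and W̃_2 = Q^{-⊤} W_2 for some invertible Q. -/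
open Matrix

theorem Matrix.exists_eq_mul_of_span_rows_le {R ι κ n : Type*} [Semiring R] [Fintype κ]
    {A : Matrix ι n R} {B : Matrix κ n R}
    (h : Submodule.span R (Set.range A) ≤ Submodule.span R (Set.range B)) :
    ∃ C : Matrix ι κ R, A = C * B := by
  choose c hc using fun i =>
    (Submodule.mem_span_range_iff_exists_fun R).mp (h (Submodule.subset_span ⟨i, rfl⟩))
  refine ⟨of c, funext fun i => ?_⟩
  rw [mul_apply_eq_vecMul, vecMul_eq_sum]
  exact (hc i).symm

theorem Matrix.mul_mul_mul_transpose_mul {R k l m n p : Type*} [CommSemiring R]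
    [Fintype k] [Fintype m] [Fintype n] [Fintype p]
    (P : Matrix l k R) (A : Matrix k m R) (S : Matrix m n R) (Q : Matrix p k R)
    (B : Matrix k n R) :
    P * A * S * (Q * B)ᵀ = P * (A * S * Bᵀ) * Qᵀ := by
  simp only [transpose_mul, Matrix.mul_assoc]

theorem whitening_matrices_ambiguity_general {M₁ M₂ K : ℕ}
    (S₁₂ : Matrix (Fin M₁) (Fin M₂) ℝ)
    (W₁ : Matrix (Fin K) (Fin M₁) ℝ) (W₂ : Matrix (Fin K) (Fin M₂) ℝ)
    (hW : W₁ * S₁₂ * W₂ᵀ = 1) :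
    (∀ Q : Matrix (Fin K) (Fin K) ℝ, IsUnit Q →
      (Q * W₁) * S₁₂ * ((Q⁻¹)ᵀ * W₂)ᵀ = 1) ∧
    (∀ (W₁' : Matrix (Fin K) (Fin M₁) ℝ) (W₂' : Matrix (Fin K) (Fin M₂) ℝ),
      W₁' * S₁₂ * W₂'ᵀ = 1 →
      Submodule.span ℝ (Set.range fun i => W₁' i) = Submodule.span ℝ (Set.range fun i => W₁ i) →
      Submodule.span ℝ (Set.range fun i => W₂' i) = Submodule.span ℝ (Set.range fun i => W₂ i) →
      ∃ Q : Matrix (Fin K) (Fin K) ℝ, IsUnit Q ∧ W₁' = Q * W₁ ∧ W₂' = (Q⁻¹)ᵀ * W₂) := by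
  refine ⟨fun Q hQ => ?_, fun W₁' W₂' hW' h₁ h₂ => ?_⟩
  · rw [mul_mul_mul_transpose_mul, hW, Matrix.mul_one, transpose_transpose,
      mul_nonsing_inv _ ((isUnit_iff_isUnit_det Q).mp hQ)]
  · obtain ⟨A, rfl⟩ := exists_eq_mul_of_span_rows_le (A := W₁') (B := W₁) h₁.le
    obtain ⟨B, rfl⟩ := exists_eq_mul_of_span_rows_le (A := W₂') (B := W₂) h₂.le
    have hAB : A * Bᵀ = 1 := by
      rwa [mul_mul_mul_transpose_mul, hW, Matrix.mul_one] at hW'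
    exact ⟨A, .of_mul_eq_one _ hAB, rfl, by rw [inv_eq_right_inv hAB, transpose_transpose]⟩

/-- If `(W₁, W₂)` whitens a rank-`K` matrix `S₁₂` (`W₁ S₁₂ W₂⊤ = I_K`), then for any
invertible `Q`, the pair `(Q W₁, Q⁻⊤ W₂)` also whitens `S₁₂`; conversely, any other
whitening pair `(W₁', W₂')` whose rows span the same row spaces satisfies `W₁' = Q W₁`
and `W₂' = Q⁻⊤ W₂` for some invertible `Q`. -/
theorem whitening_matrices_ambiguity {M₁ M₂ K : ℕ}
    (S₁₂ : Matrix (Fin M₁) (Fin M₂) ℝ) (hrank : S₁₂.rank = K)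
    (W₁ : Matrix (Fin K) (Fin M₁) ℝ) (W₂ : Matrix (Fin K) (Fin M₂) ℝ)
    (hW : W₁ * S₁₂ * W₂ᵀ = 1) :
    (∀ Q : Matrix (Fin K) (Fin K) ℝ, IsUnit Q →
      (Q * W₁) * S₁₂ * ((Q⁻¹)ᵀ * W₂)ᵀ = 1) ∧
    (∀ (W₁' : Matrix (Fin K) (Fin M₁) ℝ) (W₂' : Matrix (Fin K) (Fin M₂) ℝ),
      W₁' * S₁₂ * W₂'ᵀ = 1 →
      Submodule.span ℝ (Set.range fun i => W₁' i) = Submodule.span ℝ (Set.range fun i => W₁ i) →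
      Submodule.span ℝ (Set.range fun i => W₂' i) = Submodule.span ℝ (Set.range fun i => W₂ i) →
      ∃ Q : Matrix (Fin K) (Fin K) ℝ, IsUnit Q ∧ W₁' = Q * W₁ ∧ W₂' = (Q⁻¹)ᵀ * W₂) :=
  whitening_matrices_ambiguity_general S₁₂ W₁ W₂ hW
end

section
/- In mixed CCA, where x_1 = D_1α + ε_1 (continuous view) and x_2 | α, ε_2 ~ Poisson(D_2α + ε_2) (discrete view) with α ⊥ (ε_1, ε_2), ε_1 ⊥ ε_2, the joint cumulant generating function decomposes as K_x(t_1, t_2) = log E[e^{α⊤h(t)}] + log E[e^{ε_2⊤(e^{t_2}−1)}] + log E[e^{t_1⊤ε_1}], where h(t) = D_1⊤t_1 + D_2⊤(e^{t_2} − 1); consequently the generalized cross-covariance satisfies S_12(t) := ∇_{t_2}∇_{t_1}K_x(t) = D_1 C_α(h(t)) (diag[e^{t_2}] D_2)⊤. -/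
/-!
Conditionally on the hidden variables `p = (α, ε₁, ε₂)`, `x₁` is deterministic and the
coordinates of `x₂` are independent Poisson variables, whose moment generating function is
`E[e^{t n}] = e^{r (e^t - 1)}`. Hence the conditional mgf of `(x₁, x₂)` at `(t₁, t₂)` is
`exp (t₁ ⬝ (D₁α + ε₁) + (D₂α + ε₂) ⬝ (e^{t₂} - 1))`, whose exponent is affine in `α`, `ε₁` and
`ε₂` separately; integrating over the product law of the hidden variables splits the mgf into
three factors, which is the cumulant decomposition. In it `t₁` and `t₂` only interact through
`K_α(h(t))`, so the mixed second derivative is that of `K_α ∘ h`, computed by the chain rule with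
`∂h/∂t₁ = D₁ᵀ` and `∂h/∂t₂ = D₂ᵀ diag(e^{t₂})`.
-/

open MeasureTheory ProbabilityTheory Real Matrix Filter
open scoped Topology NNReal ENNReal Nat

lemma lintegral_pi_prod_eq_prod {ι : Type*} [Fintype ι] {Ω : ι → Type*}
    [∀ i, MeasurableSpace (Ω i)] (μ : ∀ i, Measure (Ω i)) [∀ i, IsProbabilityMeasure (μ i)]
    {f : ∀ i, Ω i → ℝ≥0∞} (hf : ∀ i, Measurable (f i)) :
    ∫⁻ x, ∏ i, f i (x i) ∂Measure.pi μ = ∏ i, ∫⁻ x, f i x ∂μ i := by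
  rw [lintegral_prod_eq_prod_lintegral_of_indepFun _ _
    (iIndepFun_pi fun i => (hf i).aemeasurable) fun i => (hf i).comp (measurable_pi_apply i)]
  exact Finset.prod_congr rfl fun i _ => (measurePreserving_eval μ i).lintegral_comp (hf i)

lemma integral_exp_eq_toReal_lintegral {X : Type*} [MeasurableSpace X] {μ : Measure X}
    {f : X → ℝ} (hf : Measurable f) :
    ∫ x, exp (f x) ∂μ = (∫⁻ x, ENNReal.ofReal (exp (f x)) ∂μ).toReal :=
  integral_eq_lintegral_of_nonneg_ae (ae_of_all _ fun _ => (exp_pos _).le)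
    hf.exp.aestronglyMeasurable

lemma measurable_map_prodMk_of_countable {α β γ : Type*} [MeasurableSpace α]
    [MeasurableSpace β] [MeasurableSpace γ] [Countable γ] [MeasurableSingletonClass γ]
    {c : α → β} (hc : Measurable c) {μ : α → Measure γ}
    (hμ : ∀ n, Measurable fun a => μ a {n}) :
    Measurable fun a => (μ a).map (Prod.mk (c a)) := by
  refine Measure.measurable_of_measurable_coe _ fun s hs => ?_
  have hsum : ∀ a, ((μ a).map (Prod.mk (c a))) s
      = ∑' n, ((fun a => (c a, n)) ⁻¹' s).indicator (fun a => μ a {n}) a := by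
    intro a
    rw [Measure.map_apply measurable_prodMk_left hs,
      ← Measure.tsum_indicator_apply_singleton _ _ (measurable_prodMk_left hs)]
    rfl
  simp only [hsum]
  exact Measurable.tsum fun n => (hμ n).indicator ((hc.prodMk measurable_const) hs)

lemma lintegral_exp_mul_poissonMeasure (r : ℝ≥0) (t : ℝ) :
    ∫⁻ n, ENNReal.ofReal (exp (t * n)) ∂poissonMeasure r
      = ENNReal.ofReal (exp (r * (exp t - 1))) := by
  have hsum : HasSum (fun n : ℕ => exp (-r) * r ^ n / n ! * exp (t * n))
      (exp (r * (exp t - 1))) := by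
    convert! (NormedSpace.expSeries_div_hasSum_exp ((r : ℝ) * exp t)).mul_left (exp (-r))
      using 1
    · ext n
      rw [mul_pow, ← exp_nat_mul, mul_comm (n : ℝ) t]
      ring
    · rw [← exp_eq_exp_ℝ, ← exp_add]
      ring_nf
  rw [poissonMeasure, lintegral_sum_measure]
  simp only [lintegral_smul_measure, lintegral_dirac, smul_eq_mul,
    ← ENNReal.ofReal_mul (by positivity : (0 : ℝ) ≤ exp (-r) * r ^ _ / _ !)]
  rw [← ENNReal.ofReal_tsum_of_nonneg (fun n => by positivity) hsum.summable, hsum.tsum_eq]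

lemma lintegral_exp_dotProduct_pi_poissonMeasure {ι : Type*} [Fintype ι] (r : ι → ℝ≥0)
    (t : ι → ℝ) :
    ∫⁻ n, ENNReal.ofReal (exp (t ⬝ᵥ fun i => (n i : ℝ)))
        ∂Measure.pi (fun i => poissonMeasure (r i))
      = ENNReal.ofReal (exp ((fun i => (r i : ℝ)) ⬝ᵥ fun i => exp (t i) - 1)) := by
  simp only [dotProduct, exp_sum, ENNReal.ofReal_prod_of_nonneg fun i _ => (exp_pos _).le]
  rw [lintegral_pi_prod_eq_prod _ (f := fun i (k : ℕ) => ENNReal.ofReal (exp (t i * k)))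
    fun i => measurable_of_countable _]
  exact Finset.prod_congr rfl fun i _ => lintegral_exp_mul_poissonMeasure (r i) (t i)

lemma measurable_pi_poissonMeasure_singleton {α ι : Type*} [MeasurableSpace α] [Fintype ι]
    {r : α → ι → ℝ≥0} (hr : Measurable r) (n : ι → ℕ) :
    Measurable fun a => Measure.pi (fun i => poissonMeasure (r a i)) {n} := by
  simp only [← Set.univ_pi_singleton, Measure.pi_pi, poissonMeasure_singleton]
  refine Finset.univ.measurable_prod fun i _ => ENNReal.measurable_ofReal.comp ?_
  exact Measurable.div_const (by fun_prop) _

section MixedCCA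

variable {κ ι₁ ι₂ : Type*} [Fintype κ] [Fintype ι₁] [Fintype ι₂]
  (D₁ : Matrix ι₁ κ ℝ) (D₂ : Matrix ι₂ κ ℝ)

/-- The conditional law of `(x₁, x₂)` given `p = (α, ε₁, ε₂)`. A negative Poisson rate is
read as `0`. -/
noncomputable def mixedCCAKernel (p : (κ → ℝ) × (ι₁ → ℝ) × (ι₂ → ℝ)) :
    Measure ((ι₁ → ℝ) × (ι₂ → ℕ)) :=
  (Measure.pi fun m => poissonMeasure ((D₂ *ᵥ p.1 + p.2.2) m).toNNReal).map
    (Prod.mk (D₁ *ᵥ p.1 + p.2.1))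

lemma measurable_mixedCCAKernel : Measurable (mixedCCAKernel D₁ D₂) :=
  measurable_map_prodMk_of_countable (by fun_prop)
    (measurable_pi_poissonMeasure_singleton (by fun_prop))

lemma lintegral_exp_mixedCCAKernel (s₁ : ι₁ → ℝ) (s₂ : ι₂ → ℝ)
    {p : (κ → ℝ) × (ι₁ → ℝ) × (ι₂ → ℝ)} (hp : 0 ≤ D₂ *ᵥ p.1 + p.2.2) :
    ∫⁻ q, ENNReal.ofReal (exp (s₁ ⬝ᵥ q.1 + s₂ ⬝ᵥ fun m => (q.2 m : ℝ)))
        ∂mixedCCAKernel D₁ D₂ p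
      = ENNReal.ofReal (exp (s₁ ⬝ᵥ (D₁ *ᵥ p.1 + p.2.1)
          + (D₂ *ᵥ p.1 + p.2.2) ⬝ᵥ fun m => exp (s₂ m) - 1)) := by
  rw [mixedCCAKernel, lintegral_map (by fun_prop) measurable_prodMk_left]
  simp only [exp_add, ENNReal.ofReal_mul (exp_pos _).le]
  rw [lintegral_const_mul _ (by fun_prop), lintegral_exp_dotProduct_pi_poissonMeasure]
  simp only [Real.coe_toNNReal _ (hp _)]

lemma dotProduct_mulVec_add_add_dotProduct (s : ι₁ → ℝ) (u : ι₂ → ℝ) (a : κ → ℝ)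
    (e₁ : ι₁ → ℝ) (e₂ : ι₂ → ℝ) :
    s ⬝ᵥ (D₁ *ᵥ a + e₁) + (D₂ *ᵥ a + e₂) ⬝ᵥ u
      = (s ᵥ* D₁ + u ᵥ* D₂) ⬝ᵥ a + (s ⬝ᵥ e₁ + u ⬝ᵥ e₂) := by
  rw [dotProduct_comm _ u, dotProduct_add, dotProduct_add, dotProduct_mulVec, dotProduct_mulVec,
    add_dotProduct]
  ring

variable {μα : Measure (κ → ℝ)} {με₁ : Measure (ι₁ → ℝ)} {με₂ : Measure (ι₂ → ℝ)}
  [SFinite με₁] [SFinite με₂]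

theorem lintegral_exp_bind_mixedCCAKernel
    (hnonneg : ∀ᵐ p ∂μα.prod (με₁.prod με₂), 0 ≤ D₂ *ᵥ p.1 + p.2.2)
    (s₁ : ι₁ → ℝ) (s₂ : ι₂ → ℝ) :
    ∫⁻ q, ENNReal.ofReal (exp (s₁ ⬝ᵥ q.1 + s₂ ⬝ᵥ fun m => (q.2 m : ℝ)))
        ∂(μα.prod (με₁.prod με₂)).bind (mixedCCAKernel D₁ D₂)
      = (∫⁻ a, ENNReal.ofReal (exp ((s₁ ᵥ* D₁ + (fun m => exp (s₂ m) - 1) ᵥ* D₂) ⬝ᵥ a)) ∂μα)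
        * ((∫⁻ e, ENNReal.ofReal (exp (s₁ ⬝ᵥ e)) ∂με₁)
          * ∫⁻ e, ENNReal.ofReal (exp ((fun m => exp (s₂ m) - 1) ⬝ᵥ e)) ∂με₂) := by
  rw [Measure.lintegral_bind (measurable_mixedCCAKernel D₁ D₂).aemeasurable (by fun_prop),
    lintegral_congr_ae (hnonneg.mono fun p hp => lintegral_exp_mixedCCAKernel D₁ D₂ s₁ s₂ hp)]
  simp only [dotProduct_mulVec_add_add_dotProduct, exp_add, ENNReal.ofReal_mul (exp_pos _).le]
  rw [← lintegral_prod_mul (by fun_prop) (by fun_prop),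
    ← lintegral_prod_mul (by fun_prop) (by fun_prop)]

theorem integral_exp_bind_mixedCCAKernel
    (hnonneg : ∀ᵐ p ∂μα.prod (με₁.prod με₂), 0 ≤ D₂ *ᵥ p.1 + p.2.2)
    (s₁ : ι₁ → ℝ) (s₂ : ι₂ → ℝ) :
    ∫ q, exp (s₁ ⬝ᵥ q.1 + s₂ ⬝ᵥ fun m => (q.2 m : ℝ))
        ∂(μα.prod (με₁.prod με₂)).bind (mixedCCAKernel D₁ D₂)
      = (∫ a, exp ((s₁ ᵥ* D₁ + (fun m => exp (s₂ m) - 1) ᵥ* D₂) ⬝ᵥ a) ∂μα)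
        * (∫ e, exp ((fun m => exp (s₂ m) - 1) ⬝ᵥ e) ∂με₂) * ∫ e, exp (s₁ ⬝ᵥ e) ∂με₁ := by
  -- No integrability is needed: `toReal` is multiplicative on `ℝ≥0∞`, with `∞ ↦ 0` matching the
  -- junk value of a non-integrable Bochner integral.
  rw [integral_exp_eq_toReal_lintegral (by fun_prop),
    integral_exp_eq_toReal_lintegral (by fun_prop), integral_exp_eq_toReal_lintegral (by fun_prop),
    integral_exp_eq_toReal_lintegral (by fun_prop), lintegral_exp_bind_mixedCCAKernel D₁ D₂ hnonneg,
    ENNReal.toReal_mul, ENNReal.toReal_mul]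
  ring

theorem log_integral_exp_bind_mixedCCAKernel [NeZero μα] [NeZero με₁] [NeZero με₂]
    (hnonneg : ∀ᵐ p ∂μα.prod (με₁.prod με₂), 0 ≤ D₂ *ᵥ p.1 + p.2.2)
    (s₁ : ι₁ → ℝ) (s₂ : ι₂ → ℝ)
    (hα : Integrable (fun a => exp ((s₁ ᵥ* D₁ + (fun m => exp (s₂ m) - 1) ᵥ* D₂) ⬝ᵥ a)) μα)
    (hε₂ : Integrable (fun e => exp ((fun m => exp (s₂ m) - 1) ⬝ᵥ e)) με₂)
    (hε₁ : Integrable (fun e => exp (s₁ ⬝ᵥ e)) με₁) :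
    log (∫ q, exp (s₁ ⬝ᵥ q.1 + s₂ ⬝ᵥ fun m => (q.2 m : ℝ))
        ∂(μα.prod (με₁.prod με₂)).bind (mixedCCAKernel D₁ D₂))
      = log (∫ a, exp ((s₁ ᵥ* D₁ + (fun m => exp (s₂ m) - 1) ᵥ* D₂) ⬝ᵥ a) ∂μα)
        + log (∫ e, exp ((fun m => exp (s₂ m) - 1) ⬝ᵥ e) ∂με₂)
        + log (∫ e, exp (s₁ ⬝ᵥ e) ∂με₁) := by
  rw [integral_exp_bind_mixedCCAKernel D₁ D₂ hnonneg,
    log_mul (mul_pos (integral_exp_pos hα) (integral_exp_pos hε₂)).ne' (integral_exp_pos hε₁).ne',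
    log_mul (integral_exp_pos hα).ne' (integral_exp_pos hε₂).ne']

end MixedCCA

section SecondDerivative

variable {E₁ E₂ F : Type*} [NormedAddCommGroup E₁] [NormedSpace ℝ E₁]
  [NormedAddCommGroup E₂] [NormedSpace ℝ E₂] [NormedAddCommGroup F] [NormedSpace ℝ F]

theorem fderiv_fderiv_apply_comp_add_add_add {G : F → ℝ} {L : E₁ →L[ℝ] F} {ψ : E₂ → F}
    {Ψ : E₂ →L[ℝ] F} {B : E₂ → ℝ} {C : E₁ → ℝ} {t₁ : E₁} {t₂ : E₂}
    (hG : ContDiffAt ℝ 2 G (L t₁ + ψ t₂)) (hψ : HasFDerivAt ψ Ψ t₂)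
    (hF : DifferentiableAt ℝ (fun s₁ => G (L s₁ + ψ t₂) + B t₂ + C s₁) t₁) (v : E₁) (w : E₂) :
    fderiv ℝ (fun s₂ => fderiv ℝ (fun s₁ => G (L s₁ + ψ s₂) + B s₂ + C s₁) t₁ v) t₂ w
      = fderiv ℝ (fderiv ℝ G) (L t₁ + ψ t₂) (Ψ w) (L v) := by
  have hC : DifferentiableAt ℝ C t₁ := by
    have hGL : DifferentiableAt ℝ (fun s₁ => G (L s₁ + ψ t₂)) t₁ :=
      (hG.differentiableAt two_ne_zero).fun_comp' t₁ (L.differentiableAt.add_const _)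
    refine ((hF.fun_sub hGL).sub_const (B t₂)).congr_of_eventuallyEq (.of_forall fun s₁ => ?_)
    simp only
    ring
  have hshift : HasFDerivAt (fun s₂ => L t₁ + ψ s₂) Ψ t₂ := hψ.const_add _
  have hGdiff : ∀ᶠ s₂ in 𝓝 t₂, DifferentiableAt ℝ G (L t₁ + ψ s₂) :=
    hshift.continuousAt.eventually
      ((hG.eventually (by simp)).mono fun u hu => hu.differentiableAt two_ne_zero)
  have hinner : (fun s₂ => fderiv ℝ (fun s₁ => G (L s₁ + ψ s₂) + B s₂ + C s₁) t₁ v)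
      =ᶠ[𝓝 t₂] fun s₂ => fderiv ℝ G (L t₁ + ψ s₂) (L v) + fderiv ℝ C t₁ v := by
    filter_upwards [hGdiff] with s₂ hs₂
    have hcomp : HasFDerivAt (fun s₁ => G (L s₁ + ψ s₂))
        ((fderiv ℝ G (L t₁ + ψ s₂)).comp L) t₁ :=
      hs₂.hasFDerivAt.comp t₁ (L.hasFDerivAt.add_const _)
    rw [((hcomp.add_const (B s₂)).fun_add hC.hasFDerivAt).fderiv]
    rfl
  have hG' : HasFDerivAt (fderiv ℝ G) (fderiv ℝ (fderiv ℝ G) (L t₁ + ψ t₂)) (L t₁ + ψ t₂) :=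
    ((hG.fderiv_right (m := 1) (by norm_num)).differentiableAt one_ne_zero).hasFDerivAt
  have houter : HasFDerivAt (fun s₂ => fderiv ℝ G (L t₁ + ψ s₂) (L v))
      ((fderiv ℝ (fderiv ℝ G) (L t₁ + ψ t₂)).comp Ψ |>.flip (L v)) t₂ := by
    simpa using (hG'.comp t₂ hshift).clm_apply (hasFDerivAt_const (L v) t₂)
  rw [hinner.fderiv_eq, fderiv_add_const, houter.fderiv]
  rfl

end SecondDerivative

lemma fderiv_fderiv_apply_eq_sum {ι : Type*} [Fintype ι] [DecidableEq ι] {G : (ι → ℝ) → ℝ}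
    {u : ι → ℝ} (hG : ContDiffAt ℝ 2 G u) (x y : ι → ℝ) :
    fderiv ℝ (fderiv ℝ G) u x y
      = ∑ i, ∑ j, y i * fderiv ℝ (fun u => fderiv ℝ G u (Pi.single j 1)) u (Pi.single i 1)
          * x j := by
  have hG' : DifferentiableAt ℝ (fderiv ℝ G) u :=
    (hG.fderiv_right (m := 1) (by norm_num)).differentiableAt one_ne_zero
  have hpartial : ∀ i j, fderiv ℝ (fun u => fderiv ℝ G u (Pi.single j 1)) u (Pi.single i 1)
      = fderiv ℝ (fderiv ℝ G) u (Pi.single i 1) (Pi.single j 1) := by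
    intro i j
    rw [fderiv_clm_apply hG' (differentiableAt_const _)]
    simp
  have hsingle : ∀ (z : ι → ℝ) i, Pi.single i (z i) = z i • (Pi.single i 1 : ι → ℝ) :=
    fun z i => by rw [← Pi.single_smul', smul_eq_mul, mul_one]
  rw [hG.isSymmSndFDerivAt (by simp) x y]
  conv_lhs => rw [← Finset.univ_sum_single y, ← Finset.univ_sum_single x]
  simp only [hsingle, hpartial, map_sum, map_smul, _root_.sum_apply, _root_.smul_apply,
    smul_eq_mul, Finset.mul_sum]
  rw [Finset.sum_comm]
  exact Finset.sum_congr rfl fun i _ => Finset.sum_congr rfl fun j _ => by ring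

lemma hasFDerivAt_exp_sub_one_vecMul {ι κ : Type*} [Fintype ι] [DecidableEq ι] [Fintype κ]
    (D : Matrix ι κ ℝ) (t : ι → ℝ) :
    HasFDerivAt (fun s => (fun i => exp (s i) - 1) ᵥ* D)
      (LinearMap.toContinuousLinearMap (vecMulLinear (diagonal (fun i => exp (t i)) * D))) t := by
  have hexp : HasFDerivAt (fun s : ι → ℝ => fun i => exp (s i) - 1)
      (LinearMap.toContinuousLinearMap (vecMulLinear (diagonal fun i => exp (t i)))) t := by
    refine hasFDerivAt_pi'.2 fun i => ((hasFDerivAt_apply i t).exp.sub_const 1).congr_fderiv ?_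
    ext v
    simp [vecMul_diagonal, mul_comm]
  refine ((LinearMap.toContinuousLinearMap (vecMulLinear D)).hasFDerivAt.comp t hexp :)
    |>.congr_fderiv ?_
  ext v : 1
  simp [vecMul_vecMul]

lemma fderiv_fderiv_apply_single_comp_vecMul_add_add_add {κ ι₁ ι₂ : Type*} [Fintype κ]
    [DecidableEq κ] [Fintype ι₁] [DecidableEq ι₁] [Fintype ι₂] [DecidableEq ι₂]
    {D₁ : Matrix ι₁ κ ℝ} {D₂ : Matrix ι₂ κ ℝ} {G : (κ → ℝ) → ℝ} {B : (ι₂ → ℝ) → ℝ}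
    {C : (ι₁ → ℝ) → ℝ} {t₁ : ι₁ → ℝ} {t₂ : ι₂ → ℝ}
    (hG : ContDiffAt ℝ 2 G (t₁ ᵥ* D₁ + (fun m => exp (t₂ m) - 1) ᵥ* D₂))
    (hF : DifferentiableAt ℝ
      (fun s₁ => G (s₁ ᵥ* D₁ + (fun m => exp (t₂ m) - 1) ᵥ* D₂) + B t₂ + C s₁) t₁)
    (m₁ : ι₁) (m₂ : ι₂) :
    fderiv ℝ (fun s₂ => fderiv ℝ
        (fun s₁ => G (s₁ ᵥ* D₁ + (fun m => exp (s₂ m) - 1) ᵥ* D₂) + B s₂ + C s₁) t₁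
          (Pi.single m₁ 1)) t₂ (Pi.single m₂ 1)
      = ∑ i, ∑ j, D₁ m₁ i
          * fderiv ℝ (fun u => fderiv ℝ G u (Pi.single j 1))
              (t₁ ᵥ* D₁ + (fun m => exp (t₂ m) - 1) ᵥ* D₂) (Pi.single i 1)
          * (exp (t₂ m₂) * D₂ m₂ j) := by
  set L := LinearMap.toContinuousLinearMap (vecMulLinear D₁)
  have hL : ∀ s, s ᵥ* D₁ = L s := fun _ => rfl
  simp only [hL] at hG hF ⊢
  rw [fderiv_fderiv_apply_comp_add_add_add (ψ := fun s : ι₂ → ℝ => (fun m => exp (s m) - 1) ᵥ* D₂)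
    hG (hasFDerivAt_exp_sub_one_vecMul D₂ t₂) hF, fderiv_fderiv_apply_eq_sum hG]
  simp [L]

theorem mixed_CCA_cgf_decomposition_general {K M₁ M₂ : ℕ}
    (μα : Measure (Fin K → ℝ)) [IsProbabilityMeasure μα]
    (με₁ : Measure (Fin M₁ → ℝ)) [IsProbabilityMeasure με₁]
    (με₂ : Measure (Fin M₂ → ℝ)) [IsProbabilityMeasure με₂]
    (D₁ : Matrix (Fin M₁) (Fin K) ℝ) (D₂ : Matrix (Fin M₂) (Fin K) ℝ)
    (hnonneg : ∀ᵐ p ∂(μα.prod (με₁.prod με₂)), ∀ m, 0 ≤ D₂.mulVec p.1 m + p.2.2 m)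
    (ν : Measure ((Fin M₁ → ℝ) × (Fin M₂ → ℕ)))
    (hν : ν = (μα.prod (με₁.prod με₂)).bind (fun p =>
      (Measure.pi fun m =>
        poissonMeasure (Real.toNNReal (D₂.mulVec p.1 m + p.2.2 m))).map
          (Prod.mk (D₁.mulVec p.1 + p.2.1))))
    (h : (Fin M₁ → ℝ) → (Fin M₂ → ℝ) → Fin K → ℝ)
    (hh : ∀ t₁ t₂, h t₁ t₂
      = fun k => (∑ m, D₁ m k * t₁ m) + ∑ m, D₂ m k * (Real.exp (t₂ m) - 1))
    (Kx : (Fin M₁ → ℝ) → (Fin M₂ → ℝ) → ℝ)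
    (hKx : Kx = fun t₁ t₂ => Real.log (∫ q,
      Real.exp ((∑ m, t₁ m * q.1 m) + ∑ m, t₂ m * (q.2 m : ℝ)) ∂ν))
    (Kα : (Fin K → ℝ) → ℝ)
    (hKα : Kα = fun u => Real.log (∫ a, Real.exp (∑ k, u k * a k) ∂μα)
    )
    -- integrability of all the moment generating functions involved
    (hint : ∀ (t₁ : Fin M₁ → ℝ) (t₂ : Fin M₂ → ℝ),
      Integrable (fun q : (Fin M₁ → ℝ) × (Fin M₂ → ℕ) =>
        Real.exp ((∑ m, t₁ m * q.1 m) + ∑ m, t₂ m * (q.2 m : ℝ))) ν ∧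
      Integrable (fun a : Fin K → ℝ => Real.exp (∑ k, h t₁ t₂ k * a k)) μα ∧
      Integrable (fun e : Fin M₂ → ℝ =>
        Real.exp (∑ m, (Real.exp (t₂ m) - 1) * e m)) με₂ ∧
      Integrable (fun e : Fin M₁ → ℝ => Real.exp (∑ m, t₁ m * e m)) με₁)
    (t₁ : Fin M₁ → ℝ) (t₂ : Fin M₂ → ℝ)
    (hsmoothx : ContDiffAt ℝ 2 (fun s : (Fin M₁ → ℝ) × (Fin M₂ → ℝ) => Kx s.1 s.2) (t₁, t₂))
    (hsmoothα : ContDiffAt ℝ 2 Kα (h t₁ t₂)) :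
    (∀ (s₁ : Fin M₁ → ℝ) (s₂ : Fin M₂ → ℝ),
      Kx s₁ s₂
        = Real.log (∫ a, Real.exp (∑ k, h s₁ s₂ k * a k) ∂μα)
          + Real.log (∫ e, Real.exp (∑ m, (Real.exp (s₂ m) - 1) * e m) ∂με₂)
          + Real.log (∫ e, Real.exp (∑ m, s₁ m * e m) ∂με₁)) ∧
    (∀ (m₁ : Fin M₁) (m₂ : Fin M₂),
      fderiv ℝ (fun s₂ => fderiv ℝ (fun s₁ => Kx s₁ s₂) t₁ (Pi.single m₁ 1)) t₂
          (Pi.single m₂ 1)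
        = ∑ i, ∑ j, D₁ m₁ i
            * (fderiv ℝ (fun u => fderiv ℝ Kα u (Pi.single j 1)) (h t₁ t₂)
                (Pi.single i 1))
            * (Real.exp (t₂ m₂) * D₂ m₂ j)) := by
  have h_eq : ∀ s₁ s₂, h s₁ s₂ = s₁ ᵥ* D₁ + (fun m => exp (s₂ m) - 1) ᵥ* D₂ := by
    intro s₁ s₂
    ext k
    simp [hh, vecMul, dotProduct, mul_comm]
  have hcgf : ∀ s₁ s₂, Kx s₁ s₂
      = log (∫ a, exp (∑ k, h s₁ s₂ k * a k) ∂μα)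
        + log (∫ e, exp (∑ m, (exp (s₂ m) - 1) * e m) ∂με₂)
        + log (∫ e, exp (∑ m, s₁ m * e m) ∂με₁) := by
    intro s₁ s₂
    obtain ⟨-, hα, hε₂, hε₁⟩ := hint s₁ s₂
    rw [h_eq] at hα ⊢
    rw [hKx, hν]
    exact log_integral_exp_bind_mixedCCAKernel D₁ D₂ hnonneg s₁ s₂ hα hε₂ hε₁
  refine ⟨hcgf, fun m₁ m₂ => ?_⟩
  have hsplit : ∀ s₁ s₂, Kx s₁ s₂ = Kα (s₁ ᵥ* D₁ + (fun m => exp (s₂ m) - 1) ᵥ* D₂)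
      + log (∫ e, exp (∑ m, (exp (s₂ m) - 1) * e m) ∂με₂)
      + log (∫ e, exp (∑ m, s₁ m * e m) ∂με₁) := by
    intro s₁ s₂
    rw [hcgf, hKα, h_eq]
  have hpair : DifferentiableAt ℝ (fun s₁ : Fin M₁ → ℝ => (s₁, t₂)) t₁ := by fun_prop
  have hdiff : DifferentiableAt ℝ (fun s₁ => Kx s₁ t₂) t₁ :=
    ((hsmoothx.differentiableAt two_ne_zero).comp t₁ hpair :)
  rw [h_eq] at hsmoothα ⊢
  simp only [hsplit] at hdiff ⊢
  exact fderiv_fderiv_apply_single_comp_vecMul_add_add_add hsmoothα hdiff m₁ m₂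

/-- Mixed CCA: `x₁ = D₁α + ε₁` (continuous view) and, conditionally on `(α, ε₂)`,
`x₂` has independent Poisson components with mean `D₂α + ε₂`; the hidden variables
`α, ε₁, ε₂` are mutually independent (product base measure, `μα` itself a product of its
marginals). Then the joint CGF decomposes as
`K_x(t₁,t₂) = log E[e^{α⊤h(t)}] + log E[e^{ε₂⊤(e^{t₂}−1)}] + log E[e^{t₁⊤ε₁}]` with
`h(t) = D₁⊤t₁ + D₂⊤(e^{t₂}−1)`, and the generalized cross-covariance satisfies
`S₁₂(t) = ∇_{t₂}∇_{t₁}K_x(t) = D₁ C_α(h(t)) (diag[e^{t₂}] D₂)⊤`. -/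
theorem mixed_CCA_cgf_decomposition {K M₁ M₂ : ℕ}
    (μs : Fin K → Measure ℝ) [∀ k, IsProbabilityMeasure (μs k)]
    (μα : Measure (Fin K → ℝ)) (hμα : μα = Measure.pi μs) [IsProbabilityMeasure μα]
    (με₁ : Measure (Fin M₁ → ℝ)) [IsProbabilityMeasure με₁]
    (με₂ : Measure (Fin M₂ → ℝ)) [IsProbabilityMeasure με₂]
    (D₁ : Matrix (Fin M₁) (Fin K) ℝ) (D₂ : Matrix (Fin M₂) (Fin K) ℝ)
    (hnonneg : ∀ᵐ p ∂(μα.prod (με₁.prod με₂)), ∀ m, 0 ≤ D₂.mulVec p.1 m + p.2.2 m)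
    (ν : Measure ((Fin M₁ → ℝ) × (Fin M₂ → ℕ)))
    (hν : ν = (μα.prod (με₁.prod με₂)).bind (fun p =>
      (Measure.pi fun m =>
        poissonMeasure (Real.toNNReal (D₂.mulVec p.1 m + p.2.2 m))).map
          (Prod.mk (D₁.mulVec p.1 + p.2.1))))
    (h : (Fin M₁ → ℝ) → (Fin M₂ → ℝ) → Fin K → ℝ)
    (hh : ∀ t₁ t₂, h t₁ t₂
      = fun k => (∑ m, D₁ m k * t₁ m) + ∑ m, D₂ m k * (Real.exp (t₂ m) - 1))
    (Kx : (Fin M₁ → ℝ) → (Fin M₂ → ℝ) → ℝ)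
    (hKx : Kx = fun t₁ t₂ => Real.log (∫ q,
      Real.exp ((∑ m, t₁ m * q.1 m) + ∑ m, t₂ m * (q.2 m : ℝ)) ∂ν))
    (Kα : (Fin K → ℝ) → ℝ)
    (hKα : Kα = fun u => Real.log (∫ a, Real.exp (∑ k, u k * a k) ∂μα)
    )
    -- integrability of all the moment generating functions involved
    (hint : ∀ (t₁ : Fin M₁ → ℝ) (t₂ : Fin M₂ → ℝ),
      Integrable (fun q : (Fin M₁ → ℝ) × (Fin M₂ → ℕ) =>
        Real.exp ((∑ m, t₁ m * q.1 m) + ∑ m, t₂ m * (q.2 m : ℝ))) ν ∧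
      Integrable (fun a : Fin K → ℝ => Real.exp (∑ k, h t₁ t₂ k * a k)) μα ∧
      Integrable (fun e : Fin M₂ → ℝ =>
        Real.exp (∑ m, (Real.exp (t₂ m) - 1) * e m)) με₂ ∧
      Integrable (fun e : Fin M₁ → ℝ => Real.exp (∑ m, t₁ m * e m)) με₁)
    (t₁ : Fin M₁ → ℝ) (t₂ : Fin M₂ → ℝ)
    (hsmoothx : ContDiffAt ℝ 2 (fun s : (Fin M₁ → ℝ) × (Fin M₂ → ℝ) => Kx s.1 s.2) (t₁, t₂))
    (hsmoothα : ContDiffAt ℝ 2 Kα (h t₁ t₂)) :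
    (∀ (s₁ : Fin M₁ → ℝ) (s₂ : Fin M₂ → ℝ),
      Kx s₁ s₂
        = Real.log (∫ a, Real.exp (∑ k, h s₁ s₂ k * a k) ∂μα)
          + Real.log (∫ e, Real.exp (∑ m, (Real.exp (s₂ m) - 1) * e m) ∂με₂)
          + Real.log (∫ e, Real.exp (∑ m, s₁ m * e m) ∂με₁)) ∧
    (∀ (m₁ : Fin M₁) (m₂ : Fin M₂),
      fderiv ℝ (fun s₂ => fderiv ℝ (fun s₁ => Kx s₁ s₂) t₁ (Pi.single m₁ 1)) t₂
          (Pi.single m₂ 1)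
        = ∑ i, ∑ j, D₁ m₁ i
            * (fderiv ℝ (fun u => fderiv ℝ Kα u (Pi.single j 1)) (h t₁ t₂)
                (Pi.single i 1))
            * (Real.exp (t₂ m₂) * D₂ m₂ j)) :=
  mixed_CCA_cgf_decomposition_general μα με₁ με₂ D₁ D₂ hnonneg ν hν h hh Kx hKx Kα hKα hint t₁ t₂
    hsmoothx hsmoothα
end
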